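/- The log canonical threshold of the hypersurface F = {x³y + y²z + xz² = 0} ⊂ ℂ³ at the origin equals 12/13. -/

import Mathlib

open MvPolynomial

/-- A hypersurface `{f = 0}` is smooth outside the origin: at every nonzero point of the
zero locus some partial derivative does not vanish. -/
def SmoothOutsideOrigin (f : MvPolynomial (Fin 3) ℂ) : Prop :=
  ∀ x : Fin 3 → ℂ, x ≠ 0 → eval x f = 0 → ∃ i, eval x (pderiv i f) ≠ 0

/-!
`F = x³y + y²z + xz²` is weighted homogeneous of degree 13 for the weights `(3, 4, 5)`, and the
origin is its only critical point: a suitable combination of the three partial derivatives is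
`13 x³z`, so a critical point has `x = 0` or `z = 0`, and either case collapses to the origin.
The weighted formula then gives `lct F = (3 + 4 + 5) / 13`.
-/

theorem eq_zero_of_loop_critical {R : Type*} [CommRing R] [NoZeroDivisors R]
    (h13 : (13 : R) ≠ 0) {a b c : R} (ha : 3 * a ^ 2 * b + c ^ 2 = 0)
    (hb : a ^ 3 + 2 * b * c = 0) (hc : b ^ 2 + 2 * a * c = 0) : a = 0 ∧ b = 0 ∧ c = 0 := by
  have key : 13 * (a ^ 3 * c) = 0 := by linear_combination c * hb - 2 * b * ha + 6 * a ^ 2 * hc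
  rcases mul_eq_zero.1 ((mul_eq_zero.1 key).resolve_left h13) with ha0 | hc0
  · have ha0 : a = 0 := pow_eq_zero_iff three_ne_zero |>.1 ha0
    subst ha0
    have hc0 : c = 0 := pow_eq_zero_iff two_ne_zero |>.1 (by linear_combination ha)
    subst hc0
    exact ⟨rfl, pow_eq_zero_iff two_ne_zero |>.1 (by linear_combination hc), rfl⟩
  · subst hc0
    exact ⟨pow_eq_zero_iff three_ne_zero |>.1 (by linear_combination hb),
      pow_eq_zero_iff two_ne_zero |>.1 (by linear_combination hc), rfl⟩

local notation "F" => (X 0 ^ 3 * X 1 + X 1 ^ 2 * X 2 + X 0 * X 2 ^ 2 : MvPolynomial (Fin 3) ℂ)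

theorem smoothOutsideOrigin_loop : SmoothOutsideOrigin F := by
  intro x hx _
  by_contra! hcrit
  have hgrad : eval x (pderiv 0 F) = 3 * x 0 ^ 2 * x 1 + x 2 ^ 2 ∧
      eval x (pderiv 1 F) = x 0 ^ 3 + 2 * x 1 * x 2 ∧
      eval x (pderiv 2 F) = x 1 ^ 2 + 2 * x 0 * x 2 := by
    simp [pderiv_X]
    refine ⟨?_, ?_, ?_⟩ <;> ring
  obtain ⟨h0, h1, h2⟩ := eq_zero_of_loop_critical (by norm_num)
    (hgrad.1 ▸ hcrit 0) (hgrad.2.1 ▸ hcrit 1) (hgrad.2.2 ▸ hcrit 2)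
  exact hx (funext fun i => by fin_cases i <;> assumption)

theorem isWeightedHomogeneous_loop : IsWeightedHomogeneous ![3, 4, 5] F 13 := by
  have hX (i : Fin 3) := isWeightedHomogeneous_X ℂ ![3, 4, 5] i
  exact ((((hX 0).pow 3).mul (hX 1)).add (((hX 1).pow 2).mul (hX 2))).add
    ((hX 0).mul ((hX 2).pow 2))

/-- The log canonical threshold of `F = {x³y + y²z + xz² = 0} ⊂ ℂ³` at the origin equals `12/13`. The log canonical threshold `lct` is axiomatized by the standard formula for a
weighted homogeneous polynomial which is smooth (hence log canonical) outside the
origin: `lct f = min 1 ((∑ wᵢ)/d)`. -/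
theorem stmt11 (lct : MvPolynomial (Fin 3) ℂ → ℚ)
    (hformula : ∀ (f : MvPolynomial (Fin 3) ℂ) (w : Fin 3 → ℕ) (d : ℕ),
      (∀ i, 0 < w i) → 0 < d → f.IsWeightedHomogeneous w d → SmoothOutsideOrigin f →
      lct f = min 1 ((∑ i, (w i : ℚ)) / (d : ℚ))) :
    lct (X 0 ^ 3 * X 1 + X 1 ^ 2 * X 2 + X 0 * X 2 ^ 2) = 12 / 13 := by
  rw [hformula _ ![3, 4, 5] 13 (by decide) (by norm_num) isWeightedHomogeneous_loop
    smoothOutsideOrigin_loop]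
  norm_num [Fin.sum_univ_three, Matrix.cons_val_two, Matrix.tail_cons, Matrix.head_cons]
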